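/- Let D ∈ ℕ₊ and let Σ_1, Σ_2 be real symmetric positive definite D×D matrices. Then for all x, ω ∈ ℝ^D the Wigner distribution function of the locally stationary Gaussian kernel k_LSG(x, x') = exp(−2π² ((x+x')/2)ᵀ Σ_1 ((x+x')/2)) · exp(−2π² (x−x')ᵀ Σ_2 (x−x')) satisfies W_{k_LSG}(x, ω) = ∫_{ℝ^D} k_LSG(x + τ/2, x − τ/2) exp(−2πi ω·τ) dτ = exp(−2π² xᵀ Σ_1 x) · N(ω | 0, Σ_2). -/

import Mathlib

open MeasureTheory Matrix
open scoped BigOperators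

noncomputable section

/-- Euclidean dot product on `ℝ^D`. -/
def dotR {D : ℕ} (x y : Fin D → ℝ) : ℝ := ∑ d, x d * y d

/-- The multivariate Gaussian density `N(v | 0, Σ)` with mean `0` and covariance `S`. -/
def gaussD {D : ℕ} (S : Matrix (Fin D) (Fin D) ℝ) (v : Fin D → ℝ) : ℝ :=
  (2 * Real.pi) ^ (-(D : ℝ) / 2) * S.det ^ (-(1 : ℝ) / 2) *
    Real.exp (-(v ⬝ᵥ (S⁻¹ *ᵥ v)) / 2)

/-- The locally stationary Gaussian kernel
`k_LSG(x, x') = exp(-2π² ((x+x')/2)ᵀ Σ₁ ((x+x')/2)) · exp(-2π² (x-x')ᵀ Σ₂ (x-x'))`. -/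
def kLSG {D : ℕ} (S1 S2 : Matrix (Fin D) (Fin D) ℝ) (x x' : Fin D → ℝ) : ℝ :=
  Real.exp (-(2 * Real.pi ^ 2) * (((x + x') / 2) ⬝ᵥ (S1 *ᵥ ((x + x') / 2)))) *
    Real.exp (-(2 * Real.pi ^ 2) * ((x - x') ⬝ᵥ (S2 *ᵥ (x - x'))))

lemma integral_comp_mulVec {D : ℕ} {U : Matrix (Fin D) (Fin D) ℝ}
    (hU : U ∈ Matrix.unitaryGroup (Fin D) ℝ) (f : (Fin D → ℝ) → ℂ) :
    ∫ v : Fin D → ℝ, f (U *ᵥ v) = ∫ τ : Fin D → ℝ, f τ := by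
  have h1 : U * star U = 1 := (Matrix.mem_unitaryGroup_iff).mp hU
  have hdet : U.det * U.det = 1 := by
    have := congrArg Matrix.det h1
    rwa [Matrix.det_mul, Matrix.star_eq_conjTranspose, Matrix.det_conjTranspose,
      star_trivial, Matrix.det_one] at this
  have hdet0 : U.det ≠ 0 := fun h => by simp [h] at hdet
  have habs : |U.det| = 1 := by
    rcases mul_self_eq_one_iff.mp hdet with h | h <;> simp [h]
  have hmp : MeasurePreserving (Matrix.toLin' U) volume volume := by
    constructor
    · exact (Matrix.toLin' U).continuous_of_finiteDimensional.measurable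
    · rw [Real.map_matrix_volume_pi_eq_smul_volume_pi hdet0, abs_inv, habs]
      simp
  have hinv : Invertible U := U.invertibleOfIsUnitDet (isUnit_iff_ne_zero.mpr hdet0)
  let e : (Fin D → ℝ) ≃ₗ[ℝ] (Fin D → ℝ) := Matrix.toLinearEquiv' U hinv
  have hemb : MeasurableEmbedding (Matrix.toLin' U) :=
    (e.toContinuousLinearEquiv.toHomeomorph).measurableEmbedding
  have := hmp.integral_comp hemb f
  simpa [Matrix.toLin'_apply] using this

lemma core {D : ℕ} {S : Matrix (Fin D) (Fin D) ℝ} (hS : S.PosDef) (ω : Fin D → ℝ) :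
    (∫ τ : Fin D → ℝ, Complex.exp (((-(2 * Real.pi ^ 2) * (τ ⬝ᵥ (S *ᵥ τ)) : ℝ) : ℂ)
        - (2 * (Real.pi : ℂ) * Complex.I) * ((ω ⬝ᵥ τ : ℝ) : ℂ)))
      = ((gaussD S ω : ℝ) : ℂ) := by
  classical
  have hH : S.IsHermitian := hS.1
  set U : Matrix (Fin D) (Fin D) ℝ := (hH.eigenvectorUnitary : Matrix (Fin D) (Fin D) ℝ) with hUdef
  set lam : Fin D → ℝ := hH.eigenvalues with hlamdef
  have hmem : U ∈ Matrix.unitaryGroup (Fin D) ℝ := hH.eigenvectorUnitary.2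
  have hlam : ∀ i, 0 < lam i := fun i => hS.eigenvalues_pos i
  have hstar : star U = Uᵀ := by
    rw [Matrix.star_eq_conjTranspose]; ext i j; simp [Matrix.conjTranspose_apply]
  have hUU : star U * U = 1 := (Matrix.mem_unitaryGroup_iff').mp hmem
  have hUU' : U * star U = 1 := (Matrix.mem_unitaryGroup_iff).mp hmem
  have hdiag : star U * S * U = Matrix.diagonal lam := by
    have := hH.conjStarAlgAut_star_eigenvectorUnitary
    simpa [Unitary.conjStarAlgAut_apply] using this
  -- transfer lemma
  have key : ∀ (z v : Fin D → ℝ), v ⬝ᵥ ((star U) *ᵥ z) = (U *ᵥ v) ⬝ᵥ z := by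
    intro z v
    rw [hstar, Matrix.dotProduct_mulVec, Matrix.vecMul_transpose]
  set c : Fin D → ℝ := (star U) *ᵥ ω with hc
  -- quadratic form identity
  have quad : ∀ v : Fin D → ℝ, (U *ᵥ v) ⬝ᵥ (S *ᵥ (U *ᵥ v)) = ∑ i, lam i * v i ^ 2 := by
    intro v
    have h1 : (Matrix.diagonal lam) *ᵥ v = (star U) *ᵥ (S *ᵥ (U *ᵥ v)) := by
      rw [← hdiag]; simp [Matrix.mulVec_mulVec, Matrix.mul_assoc]
    have h2 : v ⬝ᵥ ((Matrix.diagonal lam) *ᵥ v) = (U *ᵥ v) ⬝ᵥ (S *ᵥ (U *ᵥ v)) := by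
      rw [h1, key]
    rw [← h2]
    simp [dotProduct, Matrix.mulVec_diagonal, sq]
    exact Finset.sum_congr rfl fun i _ => by ring
  -- linear identity
  have lin : ∀ v : Fin D → ℝ, ω ⬝ᵥ (U *ᵥ v) = ∑ i, c i * v i := by
    intro v
    rw [hc, hstar, Matrix.mulVec_transpose, Matrix.dotProduct_mulVec]
    rfl
  -- spectral decomposition and inverse
  have hSspec : S = U * Matrix.diagonal lam * star U := by
    have := hH.spectral_theorem
    simpa using this
  have hdd : Matrix.diagonal lam * Matrix.diagonal lam⁻¹ = 1 := by
    rw [Matrix.diagonal_mul_diagonal]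
    have h1 : (fun i => lam i * lam⁻¹ i) = fun _ => (1:ℝ) := by
      funext i
      exact mul_inv_cancel₀ (hlam i).ne'
    rw [h1, ← Matrix.diagonal_one]
  have hSinv : S⁻¹ = U * Matrix.diagonal lam⁻¹ * star U := by
    apply inv_eq_right_inv
    conv_lhs => rw [hSspec]
    rw [show U * Matrix.diagonal lam * star U * (U * Matrix.diagonal lam⁻¹ * star U)
        = U * Matrix.diagonal lam * (star U * U) * Matrix.diagonal lam⁻¹ * star U by
      simp only [Matrix.mul_assoc]]
    rw [hUU, Matrix.mul_one, Matrix.mul_assoc U, hdd, Matrix.mul_one, hUU']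
  have sumc : ω ⬝ᵥ (S⁻¹ *ᵥ ω) = ∑ i, c i ^ 2 / lam i := by
    rw [hSinv, ← Matrix.mulVec_mulVec, ← Matrix.mulVec_mulVec, ← hc, lin]
    apply Finset.sum_congr rfl
    intro i _
    rw [Matrix.mulVec_diagonal]
    simp [Pi.inv_apply]
    ring
  -- transform the integral
  set b : Fin D → ℂ := fun i => ((2 * Real.pi ^ 2 * lam i : ℝ) : ℂ) with hb
  have hbre : ∀ i, 0 < (b i).re := by
    intro i
    simp only [hb, Complex.ofReal_re]
    have := hlam i
    positivity
  set c' : Fin D → ℂ := fun i => -(2 * (Real.pi : ℂ) * Complex.I) * (c i : ℂ) with hc'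
  have hfun : (fun v : Fin D → ℝ => Complex.exp
        (((-(2 * Real.pi ^ 2) * ((U *ᵥ v) ⬝ᵥ (S *ᵥ (U *ᵥ v))) : ℝ) : ℂ)
          - (2 * (Real.pi : ℂ) * Complex.I) * ((ω ⬝ᵥ (U *ᵥ v) : ℝ) : ℂ)))
      = fun v : Fin D → ℝ => Complex.exp (- ∑ i, b i * (v i : ℂ) ^ 2 + ∑ i, c' i * (v i : ℂ)) := by
    funext v
    congr 1
    rw [quad v, lin v, hb, hc']
    push_cast
    simp only [neg_mul, Finset.sum_neg_distrib, mul_assoc, ← Finset.mul_sum]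
    ring
  calc (∫ τ : Fin D → ℝ, Complex.exp (((-(2 * Real.pi ^ 2) * (τ ⬝ᵥ (S *ᵥ τ)) : ℝ) : ℂ)
          - (2 * (Real.pi : ℂ) * Complex.I) * ((ω ⬝ᵥ τ : ℝ) : ℂ)))
      = ∫ v : Fin D → ℝ, Complex.exp (- ∑ i, b i * (v i : ℂ) ^ 2 + ∑ i, c' i * (v i : ℂ)) := by
        rw [← integral_comp_mulVec hmem, ← hfun]
    _ = ∏ i, ((Real.pi : ℂ) / b i) ^ (1 / 2 : ℂ) * Complex.exp (c' i ^ 2 / (4 * b i)) :=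
        GaussianFourier.integral_cexp_neg_sum_mul_add hbre c'
    _ = ((gaussD S ω : ℝ) : ℂ) := by
        rw [Finset.prod_mul_distrib]
        have h2pi : (0:ℝ) < 2 * Real.pi := by positivity
        -- Part A
        have hA : (∏ i, ((Real.pi : ℂ) / b i) ^ (1 / 2 : ℂ))
            = (((2 * Real.pi) ^ (-(D : ℝ) / 2) * S.det ^ (-(1 : ℝ) / 2) : ℝ) : ℂ) := by
          have hA1 : ∀ i, ((Real.pi : ℂ) / b i) = (((2 * Real.pi * lam i)⁻¹ : ℝ) : ℂ) := by
            intro i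
            rw [hb]
            have : Real.pi / (2 * Real.pi ^ 2 * lam i) = (2 * Real.pi * lam i)⁻¹ := by
              rw [inv_eq_one_div, div_eq_div_iff (by have := hlam i; positivity) (by have := hlam i; positivity)]
              ring
            rw [← Complex.ofReal_div, this]
          have hA2 : ∀ i, (((2 * Real.pi * lam i)⁻¹ : ℝ) : ℂ) ^ (1 / 2 : ℂ)
              = ((((2 * Real.pi * lam i)⁻¹ : ℝ) ^ (1 / 2 : ℝ) : ℝ) : ℂ) := by
            intro i
            rw [Complex.ofReal_cpow (by have := hlam i; positivity)]
            norm_num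
          simp only [hA1, hA2]
          rw [← Complex.ofReal_prod]
          congr 1
          rw [Real.finset_prod_rpow _ _ (fun i _ => by have := hlam i; positivity)]
          have hprod : (∏ i, (2 * Real.pi * lam i)⁻¹) = (((2 * Real.pi) ^ D * S.det)⁻¹) := by
            rw [Finset.prod_inv_distrib, Finset.prod_mul_distrib, Finset.prod_const,
              Finset.card_univ, Fintype.card_fin]
            have : S.det = ∏ i, lam i := by simpa using hH.det_eq_prod_eigenvalues
            rw [this]
          rw [hprod, Real.inv_rpow (mul_nonneg (by positivity) hS.det_pos.le), Real.mul_rpow (by positivity) hS.det_pos.le,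
            ← Real.rpow_natCast (2 * Real.pi) D, ← Real.rpow_mul h2pi.le, mul_inv,
            ← Real.rpow_neg h2pi.le, ← Real.rpow_neg hS.det_pos.le]
          rw [show -((D:ℝ) * (1/2)) = -(D:ℝ)/2 by ring]
          norm_num
        -- Part B
        have hB : (∏ i, Complex.exp (c' i ^ 2 / (4 * b i)))
            = ((Real.exp (-(ω ⬝ᵥ (S⁻¹ *ᵥ ω)) / 2) : ℝ) : ℂ) := by
          rw [← Complex.exp_sum, Complex.ofReal_exp]
          congr 1
          rw [sumc]
          push_cast
          rw [neg_div, Finset.sum_div, ← Finset.sum_neg_distrib]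
          apply Finset.sum_congr rfl
          intro i _
          have hli : ((lam i : ℝ) : ℂ) ≠ 0 := by
            exact_mod_cast (hlam i).ne'
          have hpi : ((Real.pi : ℝ) : ℂ) ≠ 0 := by exact_mod_cast Real.pi_ne_zero
          rw [hc', hb]
          have hsq : (-(2 * (Real.pi : ℂ) * Complex.I) * (c i : ℂ)) ^ 2
              = -(4 * (Real.pi : ℂ) ^ 2 * (c i : ℂ) ^ 2) := by
            have h4 : (-(2 * (Real.pi : ℂ) * Complex.I) * (c i : ℂ)) ^ 2
                = (2 * (Real.pi : ℂ)) ^ 2 * (c i : ℂ) ^ 2 * Complex.I ^ 2 := by ring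
            rw [h4, Complex.I_sq]
            ring
          rw [hsq]
          push_cast
          have hd1 : (4 * (2 * (Real.pi : ℂ) ^ 2 * (lam i : ℂ)) : ℂ) ≠ 0 := by
            have h0 : (2 * Real.pi ^ 2 * lam i : ℝ) ≠ 0 := by
              have := hlam i; positivity
            have h0' : (2 * (Real.pi : ℂ) ^ 2 * (lam i : ℂ)) ≠ 0 := by
              exact_mod_cast h0
            exact mul_ne_zero (by norm_num) h0'
          have hd2 : ((lam i : ℂ) * 2) ≠ 0 := mul_ne_zero hli two_ne_zero
          rw [neg_div, div_div]
          congr 1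
          rw [div_eq_div_iff hd1 hd2]
          ring
        rw [hA, hB, ← Complex.ofReal_mul]
        rfl
/-- The Wigner distribution function of the locally stationary Gaussian kernel:
`W(x, ω) = ∫ k_LSG(x + τ/2, x - τ/2) exp(-2πi ⟨ω, τ⟩) dτ
         = exp(-2π² xᵀ Σ₁ x) · N(ω | 0, Σ₂)`. -/
theorem kLSG_wigner (D : ℕ) (hD : 0 < D)
    (S1 S2 : Matrix (Fin D) (Fin D) ℝ)
    (hS1 : S1.PosDef) (hS2 : S2.PosDef)
    (x ω : Fin D → ℝ) :
    (∫ τ : Fin D → ℝ,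
        ((kLSG S1 S2 (x + τ / 2) (x - τ / 2) : ℝ) : ℂ) *
          Complex.exp (-(2 * (Real.pi : ℂ) * Complex.I * ((dotR ω τ : ℝ) : ℂ))))
      = ((Real.exp (-(2 * Real.pi ^ 2) * (x ⬝ᵥ (S1 *ᵥ x))) * gaussD S2 ω : ℝ) : ℂ) := by
  have h1 : ∀ τ : Fin D → ℝ, ((x + τ / 2) + (x - τ / 2)) / 2 = x := by
    intro τ; funext i
    simp only [Pi.div_apply, Pi.add_apply, Pi.sub_apply, Pi.ofNat_apply]
    ring
  have h2 : ∀ τ : Fin D → ℝ, (x + τ / 2) - (x - τ / 2) = τ := by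
    intro τ; funext i
    simp only [Pi.div_apply, Pi.add_apply, Pi.sub_apply, Pi.ofNat_apply]
    ring
  have hdotR : ∀ τ : Fin D → ℝ, dotR ω τ = ω ⬝ᵥ τ := fun τ => rfl
  have hint : (fun τ : Fin D → ℝ =>
        ((kLSG S1 S2 (x + τ / 2) (x - τ / 2) : ℝ) : ℂ) *
          Complex.exp (-(2 * (Real.pi : ℂ) * Complex.I * ((dotR ω τ : ℝ) : ℂ))))
      = fun τ : Fin D → ℝ =>
        ((Real.exp (-(2 * Real.pi ^ 2) * (x ⬝ᵥ (S1 *ᵥ x))) : ℝ) : ℂ) *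
          Complex.exp (((-(2 * Real.pi ^ 2) * (τ ⬝ᵥ (S2 *ᵥ τ)) : ℝ) : ℂ)
            - (2 * (Real.pi : ℂ) * Complex.I) * ((ω ⬝ᵥ τ : ℝ) : ℂ)) := by
    funext τ
    rw [kLSG, h1 τ, h2 τ, hdotR τ]
    push_cast
    rw [← Complex.exp_add, ← Complex.exp_add, ← Complex.exp_add]
    congr 1
    ring
  rw [hint, MeasureTheory.integral_const_mul, core hS2 ω, ← Complex.ofReal_mul]
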